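/- (Key lemma in the proof of Proposition 1.) Let G be a simple graph on a finite vertex set V, and let (μ⁽¹⁾, Σ⁽¹⁾), (μ⁽²⁾, Σ⁽²⁾) be two pairs of mean vectors and symmetric positive definite covariance matrices with (Σ⁽¹⁾)⁻¹ ∈ S⁺(G) and (Σ⁽²⁾)⁻¹ ∈ S⁺(G). Let D ⊆ V be a seed set for the two pairs, and let A, S ⊆ V be such that A is nonempty, S is nonempty, A ∩ S = ∅, A ∩ D = ∅, and S separates A from D in G. Then the conditional parameters of X_A given X_S coincide for the two pairs, i.e. the triple (μ⁽ˡ⁾_A − Σ⁽ˡ⁾_{A,S} (Σ⁽ˡ⁾_S)⁻¹ μ⁽ˡ⁾_S, Σ⁽ˡ⁾_{A,S} (Σ⁽ˡ⁾_S)⁻¹, Σ⁽ˡ⁾_A − Σ⁽ˡ⁾_{A,S} (Σ⁽ˡ⁾_S)⁻¹ Σ⁽ˡ⁾_{S,A}) is the same for l = 1 and l = 2. -/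

import Mathlib

/-!
Write `K = Σ⁻¹`. If the rows of `K` indexed by `T` vanish outside `T ∪ S`, reading off the
`T`-rows of `K Σ = 1` blockwise gives the conditional parameters of `X_T` given `X_S` as
`(K_T⁻¹ (Kμ)_T, -K_T⁻¹ K_{T,S}, K_T⁻¹)`: they depend only on the `T`-rows of `K` and on
`(Kμ)_T`. For `T = V ∖ D` the vanishing condition is empty and the formula can be inverted, so a
seed set `D` forces the two precision matrices to share their rows outside `D`, and the two
vectors `Kμ` to agree outside `D`.

Now let `T` be the set of vertices reachable from `A` by walks avoiding `S`. As `K ∈ S⁺(G)`,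
its `T`-rows vanish outside `T ∪ S`, and since `S` separates `A` from `D`, `T` misses `D`. Hence
the conditional parameters of `X_T` given `X_S` agree for the two pairs, and those of `X_A` are
a restriction of them.
-/

open Matrix

/-- Sub-matrix of `M` with rows indexed by `A` and columns indexed by `B`. -/
def msub {V : Type*} [Fintype V] [DecidableEq V] (M : Matrix V V ℝ) (A B : Finset V) :
    Matrix A B ℝ :=
  M.submatrix (fun a => a.1) (fun b => b.1)

/-- Principal sub-matrix of `M` indexed by the finset `A`. -/
def psub {V : Type*} [Fintype V] [DecidableEq V] (M : Matrix V V ℝ) (A : Finset V) :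
    Matrix A A ℝ :=
  msub M A A

/-- Sub-vector of `x` indexed by the finset `A`. -/
def rest {V : Type*} (x : V → ℝ) (A : Finset V) : A → ℝ := fun a => x a.1

/-- The conditional parameters of `X_B` given `X_S` for a Gaussian vector with
parameters `(μ, Σ)`: the triple
`(μ_B − Σ_{B,S} Σ_S⁻¹ μ_S, Σ_{B,S} Σ_S⁻¹, Σ_B − Σ_{B,S} Σ_S⁻¹ Σ_{S,B})`. -/
noncomputable def condParams {V : Type*} [Fintype V] [DecidableEq V]
    (μ : V → ℝ) (Sg : Matrix V V ℝ) (B S : Finset V) :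
    (B → ℝ) × Matrix B S ℝ × Matrix B B ℝ :=
  (rest μ B - (msub Sg B S * (psub Sg S)⁻¹) *ᵥ rest μ S,
   msub Sg B S * (psub Sg S)⁻¹,
   psub Sg B - msub Sg B S * (psub Sg S)⁻¹ * msub Sg S B)

/-- `D` is a seed set for the pairs `(μ⁽¹⁾, Σ⁽¹⁾)`, `(μ⁽²⁾, Σ⁽²⁾)` if the conditional
parameters of `X_{V∖D}` given `X_D` coincide for the two pairs.  (For `D = V` the
condition is vacuous, and for `D = ∅` it amounts to equality of the two pairs.) -/
def IsSeedSet {V : Type*} [Fintype V] [DecidableEq V]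
    (μ₁ : V → ℝ) (S₁ : Matrix V V ℝ) (μ₂ : V → ℝ) (S₂ : Matrix V V ℝ)
    (D : Finset V) : Prop :=
  condParams μ₁ S₁ Dᶜ D = condParams μ₂ S₂ Dᶜ D

/-- `K ∈ S⁺(G)`: `K` is symmetric positive definite with `K v w = 0` for all distinct
vertices `v, w` that are not adjacent in `G`. -/
def SPlus {V : Type*} [Fintype V] (G : SimpleGraph V) (K : Matrix V V ℝ) : Prop :=
  K.IsSymm ∧ K.PosDef ∧ ∀ v w : V, v ≠ w → ¬ G.Adj v w → K v w = 0

/-- `S` separates `A` from `B` in `G`: every walk from a vertex of `A∖S` to a vertex of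
`B∖S` passes through a vertex of `S`. -/
def Separates {V : Type*} (G : SimpleGraph V) (A B S : Finset V) : Prop :=
  ∀ a b : V, a ∈ A → a ∉ S → b ∈ B → b ∉ S →
    ∀ w : G.Walk a b, ∃ s ∈ S, s ∈ w.support

section

variable {V : Type*} [Fintype V]

section Separation

variable (G : SimpleGraph V) (A S : Finset V)

open Classical in
noncomputable def reachAvoiding : Finset V :=
  Finset.univ.filter fun v => ∃ a ∈ A, ∃ w : G.Walk a v, ∀ x ∈ w.support, x ∉ S

variable {G A S}

lemma mem_reachAvoiding {v : V} :
    v ∈ reachAvoiding G A S ↔ ∃ a ∈ A, ∃ w : G.Walk a v, ∀ x ∈ w.support, x ∉ S := by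
  simp [reachAvoiding]

lemma subset_reachAvoiding (hAS : Disjoint A S) : A ⊆ reachAvoiding G A S := fun a ha =>
  mem_reachAvoiding.2 ⟨a, ha, .nil, by simpa using Finset.disjoint_left.mp hAS ha⟩

lemma disjoint_reachAvoiding : Disjoint (reachAvoiding G A S) S := by
  refine Finset.disjoint_left.2 fun v hv => ?_
  obtain ⟨a, -, w, hw⟩ := mem_reachAvoiding.1 hv
  exact hw v w.end_mem_support

lemma Separates.disjoint_reachAvoiding {D : Finset V} (hsep : Separates G A D S) :
    Disjoint (reachAvoiding G A S) D := by
  refine Finset.disjoint_left.2 fun v hv hvD => ?_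
  obtain ⟨a, ha, w, hw⟩ := mem_reachAvoiding.1 hv
  obtain ⟨s, hs, hsw⟩ := hsep a v ha (hw a w.start_mem_support) hvD (hw v w.end_mem_support) w
  exact hw s hsw hs

lemma mem_reachAvoiding_of_adj {t u : V} (ht : t ∈ reachAvoiding G A S) (hadj : G.Adj t u)
    (hu : u ∉ S) : u ∈ reachAvoiding G A S := by
  obtain ⟨a, ha, w, hw⟩ := mem_reachAvoiding.1 ht
  refine mem_reachAvoiding.2 ⟨a, ha, w.concat hadj, fun x hx => ?_⟩
  rw [SimpleGraph.Walk.support_concat, List.mem_append, List.mem_singleton] at hx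
  rcases hx with hx | rfl
  exacts [hw x hx, hu]

lemma SPlus.apply_eq_zero_of_reachAvoiding {K : Matrix V V ℝ} (hK : SPlus G K) :
    ∀ t ∈ reachAvoiding G A S, ∀ u, u ∉ reachAvoiding G A S → u ∉ S → K t u = 0 :=
  fun t ht u huT huS => hK.2.2 t u (fun h => huT (h ▸ ht))
    fun hadj => huT (mem_reachAvoiding_of_adj ht hadj huS)

end Separation

variable [DecidableEq V]

section BlockAlgebra

variable {T S : Finset V} {K : Matrix V V ℝ}

lemma sum_mul_eq_add_of_vanishing (hTS : Disjoint T S)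
    (hK : ∀ t ∈ T, ∀ u, u ∉ T → u ∉ S → K t u = 0) {t : V} (ht : t ∈ T) (f : V → ℝ) :
    ∑ v, K t v * f v = ∑ u : T, K t u * f u + ∑ u : S, K t u * f u := by
  rw [Finset.sum_coe_sort T (fun v => K t v * f v), Finset.sum_coe_sort S (fun v => K t v * f v),
    ← Finset.sum_union hTS]
  refine (Finset.sum_subset (Finset.subset_univ _) fun u _ hu => ?_).symm
  rw [Finset.mem_union, not_or] at hu
  rw [hK t ht u hu.1 hu.2, zero_mul]

lemma msub_mul_eq_of_vanishing (hTS : Disjoint T S)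
    (hK : ∀ t ∈ T, ∀ u, u ∉ T → u ∉ S → K t u = 0) (M : Matrix V V ℝ) (X : Finset V) :
    msub (K * M) T X = psub K T * msub M T X + msub K T S * msub M S X := by
  ext i j
  exact sum_mul_eq_add_of_vanishing hTS hK i.2 (M · j)

lemma rest_mulVec_eq_of_vanishing (hTS : Disjoint T S)
    (hK : ∀ t ∈ T, ∀ u, u ∉ T → u ∉ S → K t u = 0) (x : V → ℝ) :
    rest (K *ᵥ x) T = psub K T *ᵥ rest x T + msub K T S *ᵥ rest x S := by
  ext i
  exact sum_mul_eq_add_of_vanishing hTS hK i.2 x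

lemma psub_one (T : Finset V) : psub (1 : Matrix V V ℝ) T = 1 :=
  submatrix_one _ Subtype.val_injective

lemma msub_one_of_disjoint (hTS : Disjoint T S) : msub (1 : Matrix V V ℝ) T S = 0 := by
  ext i j
  exact one_apply_ne fun h : (i : V) = j => Finset.disjoint_left.mp hTS i.2 (h ▸ j.2)

end BlockAlgebra

lemma Matrix.PosDef.isUnit_det_psub {Sg : Matrix V V ℝ} (h : Sg.PosDef) (B : Finset V) :
    IsUnit (psub Sg B).det :=
  (h.submatrix Subtype.val_injective).det_pos.ne'.isUnit

section Schur

variable {Sg : Matrix V V ℝ} {T S : Finset V}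

lemma psub_inv_mul_regression (hSg : IsUnit Sg.det) (hTS : Disjoint T S)
    (hS : IsUnit (psub Sg S).det) (hK : ∀ t ∈ T, ∀ u, u ∉ T → u ∉ S → Sg⁻¹ t u = 0) :
    psub Sg⁻¹ T * (msub Sg T S * (psub Sg S)⁻¹) = -msub Sg⁻¹ T S := by
  have h := msub_mul_eq_of_vanishing hTS hK Sg S
  rw [nonsing_inv_mul Sg hSg, msub_one_of_disjoint hTS, eq_comm, add_eq_zero_iff_eq_neg,
    ← psub] at h
  rw [← Matrix.mul_assoc, h, Matrix.neg_mul, Matrix.mul_assoc, mul_nonsing_inv _ hS,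
    Matrix.mul_one]

lemma psub_inv_mul_schur (hSg : IsUnit Sg.det) (hTS : Disjoint T S)
    (hS : IsUnit (psub Sg S).det) (hK : ∀ t ∈ T, ∀ u, u ∉ T → u ∉ S → Sg⁻¹ t u = 0) :
    psub Sg⁻¹ T * (psub Sg T - msub Sg T S * (psub Sg S)⁻¹ * msub Sg S T) = 1 := by
  have h := msub_mul_eq_of_vanishing hTS hK Sg T
  rw [nonsing_inv_mul Sg hSg, ← psub, psub_one] at h
  rw [Matrix.mul_sub, ← Matrix.mul_assoc, psub_inv_mul_regression hSg hTS hS hK, Matrix.neg_mul,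
    sub_neg_eq_add]
  exact h.symm

lemma isUnit_det_psub_inv (hSg : IsUnit Sg.det) (hTS : Disjoint T S)
    (hS : IsUnit (psub Sg S).det) (hK : ∀ t ∈ T, ∀ u, u ∉ T → u ∉ S → Sg⁻¹ t u = 0) :
    IsUnit (psub Sg⁻¹ T).det :=
  isUnit_det_of_right_inverse (psub_inv_mul_schur hSg hTS hS hK)

lemma condParams_eq_of_inv_vanishing (μ : V → ℝ) (hSg : IsUnit Sg.det) (hTS : Disjoint T S)
    (hS : IsUnit (psub Sg S).det) (hK : ∀ t ∈ T, ∀ u, u ∉ T → u ∉ S → Sg⁻¹ t u = 0) :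
    condParams μ Sg T S = ((psub Sg⁻¹ T)⁻¹ *ᵥ rest (Sg⁻¹ *ᵥ μ) T,
      -((psub Sg⁻¹ T)⁻¹ * msub Sg⁻¹ T S), (psub Sg⁻¹ T)⁻¹) := by
  have hB := psub_inv_mul_regression hSg hTS hS hK
  have hP := isUnit_det_psub_inv hSg hTS hS hK
  have hm : psub Sg⁻¹ T *ᵥ (rest μ T - (msub Sg T S * (psub Sg S)⁻¹) *ᵥ rest μ S)
      = rest (Sg⁻¹ *ᵥ μ) T := by
    rw [rest_mulVec_eq_of_vanishing hTS hK, mulVec_sub, mulVec_mulVec, hB, neg_mulVec,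
      sub_neg_eq_add]
  refine Prod.ext ?_ (Prod.ext ?_ (inv_eq_right_inv (psub_inv_mul_schur hSg hTS hS hK)).symm)
  · rw [← hm, mulVec_mulVec, nonsing_inv_mul _ hP, one_mulVec]
    rfl
  · rw [← Matrix.mul_neg, ← hB, nonsing_inv_mul_cancel_left _ _ hP]
    rfl

end Schur

lemma condParams_eq_of_inv_rows_eq {μ₁ μ₂ : V → ℝ} {S₁ S₂ : Matrix V V ℝ} {T S : Finset V}
    (h₁ : IsUnit S₁.det) (h₂ : IsUnit S₂.det) (hTS : Disjoint T S)
    (hS₁ : IsUnit (psub S₁ S).det) (hS₂ : IsUnit (psub S₂ S).det)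
    (hK₁ : ∀ t ∈ T, ∀ u, u ∉ T → u ∉ S → S₁⁻¹ t u = 0)
    (hK₂ : ∀ t ∈ T, ∀ u, u ∉ T → u ∉ S → S₂⁻¹ t u = 0)
    (hrows : ∀ t ∈ T, ∀ v, S₁⁻¹ t v = S₂⁻¹ t v)
    (hpot : ∀ t ∈ T, (S₁⁻¹ *ᵥ μ₁) t = (S₂⁻¹ *ᵥ μ₂) t) :
    condParams μ₁ S₁ T S = condParams μ₂ S₂ T S := by
  have hP : psub S₁⁻¹ T = psub S₂⁻¹ T := by
    ext i j
    exact hrows i i.2 j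
  have hM : msub S₁⁻¹ T S = msub S₂⁻¹ T S := by
    ext i j
    exact hrows i i.2 j
  have hh : rest (S₁⁻¹ *ᵥ μ₁) T = rest (S₂⁻¹ *ᵥ μ₂) T := funext fun i => hpot i i.2
  rw [condParams_eq_of_inv_vanishing μ₁ h₁ hTS hS₁ hK₁,
    condParams_eq_of_inv_vanishing μ₂ h₂ hTS hS₂ hK₂, hP, hM, hh]

lemma IsSeedSet.inv_rows_eq {μ₁ μ₂ : V → ℝ} {S₁ S₂ : Matrix V V ℝ} {D : Finset V}
    (hseed : IsSeedSet μ₁ S₁ μ₂ S₂ D) (h₁ : IsUnit S₁.det) (h₂ : IsUnit S₂.det)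
    (hD₁ : IsUnit (psub S₁ D).det) (hD₂ : IsUnit (psub S₂ D).det) :
    (∀ t ∉ D, ∀ v, S₁⁻¹ t v = S₂⁻¹ t v) ∧ ∀ t ∉ D, (S₁⁻¹ *ᵥ μ₁) t = (S₂⁻¹ *ᵥ μ₂) t := by
  have hvac (K : Matrix V V ℝ) : ∀ t ∈ Dᶜ, ∀ u, u ∉ Dᶜ → u ∉ D → K t u = 0 :=
    fun _ _ _ hu hu' => absurd (Finset.mem_compl.2 hu') hu
  have hP₁ := isUnit_det_psub_inv h₁ disjoint_compl_left hD₁ (hvac _)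
  rw [IsSeedSet, condParams_eq_of_inv_vanishing μ₁ h₁ disjoint_compl_left hD₁ (hvac _),
    condParams_eq_of_inv_vanishing μ₂ h₂ disjoint_compl_left hD₂ (hvac _)] at hseed
  simp only [Prod.mk.injEq, neg_inj] at hseed
  obtain ⟨hh, hM, hPinv⟩ := hseed
  have hP := inv_inj hPinv hP₁
  rw [← hP] at hh hM
  replace hM : msub S₁⁻¹ Dᶜ D = msub S₂⁻¹ Dᶜ D := by
    rw [← mul_nonsing_inv_cancel_left _ (msub S₁⁻¹ Dᶜ D) hP₁, hM,
      mul_nonsing_inv_cancel_left _ _ hP₁]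
  replace hh := mulVec_injective_iff_isUnit.2
    ((isUnit_iff_isUnit_det _).2 (isUnit_nonsing_inv_det _ hP₁)) hh
  refine ⟨fun t ht v => ?_, fun t ht => congrFun hh ⟨t, Finset.mem_compl.2 ht⟩⟩
  by_cases hv : v ∈ D
  · exact congrFun (congrFun hM ⟨t, Finset.mem_compl.2 ht⟩) ⟨v, hv⟩
  · exact congrFun (congrFun hP ⟨t, Finset.mem_compl.2 ht⟩) ⟨v, Finset.mem_compl.2 hv⟩

lemma condParams_eq_of_subset {μ₁ μ₂ : V → ℝ} {S₁ S₂ : Matrix V V ℝ} {A T S : Finset V}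
    (hAT : A ⊆ T) (h : condParams μ₁ S₁ T S = condParams μ₂ S₂ T S) :
    condParams μ₁ S₁ A S = condParams μ₂ S₂ A S := by
  let ι : A → T := fun a => ⟨a, hAT a.2⟩
  have hres (μ : V → ℝ) (Sg : Matrix V V ℝ) : condParams μ Sg A S =
      ((condParams μ Sg T S).1 ∘ ι, (condParams μ Sg T S).2.1.submatrix ι id,
        (condParams μ Sg T S).2.2.submatrix ι ι) := rfl
  rw [hres, hres, h]

end

theorem stmt_13_general {V : Type*} [Fintype V] [DecidableEq V]
    (G : SimpleGraph V)
    (μ₁ μ₂ : V → ℝ) (S₁ S₂ : Matrix V V ℝ)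
    (h₁ : S₁.PosDef) (h₂ : S₂.PosDef)
    (hG₁ : SPlus G S₁⁻¹) (hG₂ : SPlus G S₂⁻¹)
    (D : Finset V) (hseed : IsSeedSet μ₁ S₁ μ₂ S₂ D)
    (A S : Finset V)
    (hAS : Disjoint A S)
    (hsep : Separates G A D S) :
    condParams μ₁ S₁ A S = condParams μ₂ S₂ A S := by
  have hunit₁ := h₁.det_pos.ne'.isUnit
  have hunit₂ := h₂.det_pos.ne'.isUnit
  obtain ⟨hrows, hpot⟩ :=
    hseed.inv_rows_eq hunit₁ hunit₂ (h₁.isUnit_det_psub D) (h₂.isUnit_det_psub D)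
  have hTD := hsep.disjoint_reachAvoiding
  refine condParams_eq_of_subset (subset_reachAvoiding (G := G) hAS) ?_
  exact condParams_eq_of_inv_rows_eq hunit₁ hunit₂ disjoint_reachAvoiding
    (h₁.isUnit_det_psub S) (h₂.isUnit_det_psub S) hG₁.apply_eq_zero_of_reachAvoiding
    hG₂.apply_eq_zero_of_reachAvoiding (fun t ht => hrows t (Finset.disjoint_left.1 hTD ht))
    (fun t ht => hpot t (Finset.disjoint_left.1 hTD ht))

/-- Key lemma in the proof of Proposition 1: if `D` is a seed set for two Gaussian
graphical distributions Markov with respect to `G`, and `S` is a nonempty set disjoint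
from the nonempty set `A` which separates `A` from `D` in `G` (with `A ∩ D = ∅`), then
the conditional parameters of `X_A` given `X_S` coincide for the two distributions. -/
theorem stmt_13 {V : Type*} [Fintype V] [DecidableEq V]
    (G : SimpleGraph V)
    (μ₁ μ₂ : V → ℝ) (S₁ S₂ : Matrix V V ℝ)
    (h₁ : S₁.PosDef) (h₂ : S₂.PosDef)
    (hG₁ : SPlus G S₁⁻¹) (hG₂ : SPlus G S₂⁻¹)
    (D : Finset V) (hseed : IsSeedSet μ₁ S₁ μ₂ S₂ D)
    (A S : Finset V) (hA : A.Nonempty) (hS : S.Nonempty)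
    (hAS : Disjoint A S) (hAD : Disjoint A D)
    (hsep : Separates G A D S) :
    condParams μ₁ S₁ A S = condParams μ₂ S₂ A S :=
  stmt_13_general G μ₁ μ₂ S₁ S₂ h₁ h₂ hG₁ hG₂ D hseed A S hAS hsep
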